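/- arXiv:1207.1153 — 2 statements merged into one kernel-verified Lean document; each statement's English description precedes it below -/
import Mathlib

section
/- Let ψ : ℝ^{2N} → ℝ^{2N} be differentiable with derivative Lipschitz of constant L > 0, let m > 0, ε ∈ (0,1), and let α, p ∈ ℝ^{2N} satisfy ψ'(α)p = −ψ(α), ψ(α) ≠ 0, and ‖p‖ ≤ m‖ψ(α)‖. Set λ̄ = (1 − ε)/(L m² ‖ψ(α)‖). Then for every λ with 0 < λ ≤ min{1, λ̄}, ‖ψ(α + λp)‖ ≤ (1 − ελ)‖ψ(α)‖. -/
/-!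
By the mean value inequality, a Lipschitz derivative bounds the Taylor remainder:
`‖ψ(α + h) - ψ(α) - ψ'(α)h‖ ≤ L‖h‖²`. Along the Newton direction `ψ'(α)p = -ψ(α)` this gives
`‖ψ(α + λp)‖ ≤ (1 - λ)‖ψ(α)‖ + Lλ²‖p‖²`, and `‖p‖ ≤ m‖ψ(α)‖` together with `λ ≤ λ̄` turns the
quadratic term into at most `λ(1 - ε)‖ψ(α)‖`.
-/

section NewtonStep

variable {E F : Type*} [NormedAddCommGroup E] [NormedSpace ℝ E]
  [NormedAddCommGroup F] [NormedSpace ℝ F] {f : E → F} {L : ℝ} {a : E}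

theorem norm_sub_sub_fderiv_le_of_lipschitz (hf : Differentiable ℝ f) (hL : 0 ≤ L)
    (hlip : ∀ x, ‖fderiv ℝ f x - fderiv ℝ f a‖ ≤ L * ‖x - a‖) (h : E) :
    ‖f (a + h) - f a - fderiv ℝ f a h‖ ≤ L * ‖h‖ ^ 2 := by
  have hbound : ∀ x ∈ segment ℝ a (a + h), ‖fderiv ℝ f x - fderiv ℝ f a‖ ≤ L * ‖h‖ := by
    intro x hx
    calc ‖fderiv ℝ f x - fderiv ℝ f a‖ ≤ L * ‖x - a‖ := hlip x
      _ ≤ L * ‖h‖ := by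
        gcongr
        simpa using norm_sub_le_of_mem_segment hx
  have hmvt := (convex_segment a (a + h)).norm_image_sub_le_of_norm_hasFDerivWithin_le'
    (fun x _ => (hf x).hasFDerivAt.hasFDerivWithinAt) hbound
    (left_mem_segment ℝ a (a + h)) (right_mem_segment ℝ a (a + h))
  simpa [pow_two, mul_assoc] using hmvt

theorem norm_apply_add_smul_newton_le (hf : Differentiable ℝ f) (hL : 0 ≤ L)
    (hlip : ∀ x, ‖fderiv ℝ f x - fderiv ℝ f a‖ ≤ L * ‖x - a‖)
    {p : E} (hp : fderiv ℝ f a p = -f a) {t : ℝ} (ht₀ : 0 ≤ t) (ht₁ : t ≤ 1) :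
    ‖f (a + t • p)‖ ≤ (1 - t) * ‖f a‖ + L * t ^ 2 * ‖p‖ ^ 2 := by
  have hrem := norm_sub_sub_fderiv_le_of_lipschitz hf hL hlip (t • p)
  rw [norm_smul, Real.norm_of_nonneg ht₀] at hrem
  calc ‖f (a + t • p)‖
      = ‖(1 - t) • f a + (f (a + t • p) - f a - fderiv ℝ f a (t • p))‖ := by
        rw [map_smul, hp]
        congr 1
        module
    _ ≤ ‖(1 - t) • f a‖ + ‖f (a + t • p) - f a - fderiv ℝ f a (t • p)‖ := norm_add_le _ _
    _ ≤ (1 - t) * ‖f a‖ + L * t ^ 2 * ‖p‖ ^ 2 := by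
        rw [norm_smul, Real.norm_of_nonneg (sub_nonneg.2 ht₁)]
        linarith [mul_pow t ‖p‖ 2]

end NewtonStep

theorem stmt_10_general {N : ℕ}
    (ψ : EuclideanSpace ℝ (Fin (2 * N)) → EuclideanSpace ℝ (Fin (2 * N)))
    (hdiff : Differentiable ℝ ψ) (L m ε : ℝ) (hL : 0 < L)
    (hε : ε ∈ Set.Ioo (0 : ℝ) 1)
    (hlip : ∀ a b, ‖fderiv ℝ ψ a - fderiv ℝ ψ b‖ ≤ L * ‖a - b‖)
    (α p : EuclideanSpace ℝ (Fin (2 * N)))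
    (hp : fderiv ℝ ψ α p = -ψ α)
    (hpb : ‖p‖ ≤ m * ‖ψ α‖) :
    ∀ lam : ℝ, 0 < lam → lam ≤ min 1 ((1 - ε) / (L * m ^ 2 * ‖ψ α‖)) →
      ‖ψ (α + lam • p)‖ ≤ (1 - ε * lam) * ‖ψ α‖ := by
  intro lam hlam hle
  obtain ⟨hle₁, hle_bar⟩ := le_min_iff.1 hle
  have hstep : lam * (L * m ^ 2 * ‖ψ α‖) ≤ 1 - ε :=
    mul_le_of_le_div₀ (sub_nonneg.2 hε.2.le) (by positivity) hle_bar
  have hp_sq : ‖p‖ ^ 2 ≤ (m * ‖ψ α‖) ^ 2 := pow_le_pow_left₀ (norm_nonneg p) hpb 2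
  calc ‖ψ (α + lam • p)‖
      ≤ (1 - lam) * ‖ψ α‖ + L * lam ^ 2 * ‖p‖ ^ 2 :=
        norm_apply_add_smul_newton_le hdiff hL.le (fun x => hlip x α) hp hlam.le hle₁
    _ ≤ (1 - lam) * ‖ψ α‖ + L * lam ^ 2 * (m * ‖ψ α‖) ^ 2 := by gcongr
    _ = (1 - lam) * ‖ψ α‖ + lam * (lam * (L * m ^ 2 * ‖ψ α‖)) * ‖ψ α‖ := by ring
    _ ≤ (1 - lam) * ‖ψ α‖ + lam * (1 - ε) * ‖ψ α‖ := by gcongr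
    _ = (1 - ε * lam) * ‖ψ α‖ := by ring

/-- Armijo-type acceptance for damped Newton steps: if `ψ'` is Lipschitz with
constant `L > 0`, `ψ'(α)p = -ψ(α)`, `ψ(α) ≠ 0`, `‖p‖ ≤ m‖ψ(α)‖` and
`λ̄ = (1-ε)/(Lm²‖ψ(α)‖)`, then for all `0 < λ ≤ min{1, λ̄}` one has
`‖ψ(α + λp)‖ ≤ (1 - ελ)‖ψ(α)‖`. -/
theorem stmt_10 {N : ℕ}
    (ψ : EuclideanSpace ℝ (Fin (2 * N)) → EuclideanSpace ℝ (Fin (2 * N)))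
    (hdiff : Differentiable ℝ ψ) (L m ε : ℝ) (hL : 0 < L) (hm : 0 < m)
    (hε : ε ∈ Set.Ioo (0 : ℝ) 1)
    (hlip : ∀ a b, ‖fderiv ℝ ψ a - fderiv ℝ ψ b‖ ≤ L * ‖a - b‖)
    (α p : EuclideanSpace ℝ (Fin (2 * N)))
    (hp : fderiv ℝ ψ α p = -ψ α) (hne : ψ α ≠ 0)
    (hpb : ‖p‖ ≤ m * ‖ψ α‖) :
    ∀ lam : ℝ, 0 < lam → lam ≤ min 1 ((1 - ε) / (L * m ^ 2 * ‖ψ α‖)) →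
      ‖ψ (α + lam • p)‖ ≤ (1 - ε * lam) * ‖ψ α‖ :=
  stmt_10_general ψ hdiff L m ε hL hε hlip α p hp hpb
end

section
/- Let ψ : ℝ^{2N} → ℝ^{2N} be differentiable with derivative Lipschitz of constant L > 0, and suppose for every α the derivative ψ'(α) is invertible with ‖[ψ'(α)]⁻¹‖ ≤ m. Fix ξ ∈ (0,1) and ε ∈ (0,1), fix α⁰ with ψ(α⁰) ≠ 0, and define recursively: p^k = −[ψ'(α^k)]⁻¹ψ(α^k); λ_k = ξ^{i_k} where i_k is the smallest nonnegative integer i with ‖ψ(α^k + ξ^i p^k)‖ ≤ (1 − εξ^i)‖ψ(α^k)‖ (such i exists whenever ψ(α^k) ≠ 0); and α^{k+1} = α^k + λ_k p^k. Then, with q = 1 − ε·min{1, ξ(1−ε)/(L m² ‖ψ(α⁰)‖)} ∈ (0,1), one has ‖ψ(α^k)‖ ≤ q^k ‖ψ(α⁰)‖ for all k; in particular ‖ψ(α^k)‖ → 0 with linear rate. -/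
set_option maxHeartbeats 1000000

lemma taylor_aux {E : Type*} [NormedAddCommGroup E] [NormedSpace ℝ E]
    (ψ : E → E) (hdiff : Differentiable ℝ ψ) (L : ℝ) (hL : 0 ≤ L)
    (hlip : ∀ a b, ‖fderiv ℝ ψ a - fderiv ℝ ψ b‖ ≤ L * ‖a - b‖)
    (a p : E) (lam : ℝ) (hlam0 : 0 < lam) (hlam1 : lam ≤ 1)
    (hp : fderiv ℝ ψ a p = -ψ a) :
    ‖ψ (a + lam • p)‖ ≤ (1 - lam) * ‖ψ a‖ + L * lam ^ 2 * ‖p‖ ^ 2 := by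
  set r := lam * ‖p‖ with hr
  have hr0 : 0 ≤ r := mul_nonneg hlam0.le (norm_nonneg _)
  have key : ‖ψ (a + lam • p) - ψ a - (fderiv ℝ ψ a) ((a + lam • p) - a)‖ ≤
      (L * r) * ‖(a + lam • p) - a‖ := by
    apply (convex_closedBall a r).norm_image_sub_le_of_norm_fderiv_le'
      (fun x _ => hdiff x)
      (fun x hx => by
        calc ‖fderiv ℝ ψ x - fderiv ℝ ψ a‖ ≤ L * ‖x - a‖ := hlip x a
        _ ≤ L * r := by
            have := mem_closedBall_iff_norm.mp hx
            exact mul_le_mul_of_nonneg_left this hL)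
      (Metric.mem_closedBall_self hr0)
    rw [mem_closedBall_iff_norm]
    simp [norm_smul, abs_of_pos hlam0, hr]
  have h1 : (a + lam • p) - a = lam • p := by abel
  rw [h1] at key
  have h2 : (fderiv ℝ ψ a) (lam • p) = -(lam • ψ a) := by
    rw [map_smul, hp, smul_neg]
  rw [h2] at key
  have h3 : ψ (a + lam • p) - ψ a - -(lam • ψ a) = ψ (a + lam • p) - (1 - lam) • ψ a := by
    rw [sub_smul, one_smul]; abel
  rw [h3] at key
  have h4 : ‖lam • p‖ = lam * ‖p‖ := by simp [norm_smul, abs_of_pos hlam0]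
  calc ‖ψ (a + lam • p)‖ ≤ ‖(1 - lam) • ψ a‖ + ‖ψ (a + lam • p) - (1 - lam) • ψ a‖ := by
        have := norm_add_le ((1 - lam) • ψ a) (ψ (a + lam • p) - (1 - lam) • ψ a)
        simpa using this
    _ ≤ (1 - lam) * ‖ψ a‖ + L * lam ^ 2 * ‖p‖ ^ 2 := by
        rw [norm_smul, Real.norm_eq_abs, abs_of_nonneg (by linarith)]
        have := key
        rw [h4, hr] at this
        nlinarith [norm_nonneg p]


/-- Global linear convergence of the damped Newton method with geometric
backtracking line search: with `ψ'` Lipschitz of constant `L > 0`, inverse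
Jacobians uniformly bounded by `m`, Newton directions `p^k`, and step sizes
`λ_k = ξ^{i_k}` chosen by the Armijo-type test, one has
`‖ψ(α^k)‖ ≤ q^k ‖ψ(α⁰)‖` with `q = 1 - ε·min{1, ξ(1-ε)/(Lm²‖ψ(α⁰)‖)} ∈ (0,1)`;
in particular `‖ψ(α^k)‖ → 0`. -/
theorem stmt_12 {N : ℕ}
    (ψ : EuclideanSpace ℝ (Fin (2 * N)) → EuclideanSpace ℝ (Fin (2 * N)))
    (hdiff : Differentiable ℝ ψ) (L m ξ ε : ℝ) (hL : 0 < L) (hm : 0 < m)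
    (hξ : ξ ∈ Set.Ioo (0 : ℝ) 1) (hε : ε ∈ Set.Ioo (0 : ℝ) 1)
    (hlip : ∀ a b, ‖fderiv ℝ ψ a - fderiv ℝ ψ b‖ ≤ L * ‖a - b‖)
    (hinv : ∀ a, ∃ J : EuclideanSpace ℝ (Fin (2 * N)) ≃L[ℝ]
        EuclideanSpace ℝ (Fin (2 * N)),
      (J : EuclideanSpace ℝ (Fin (2 * N)) →L[ℝ] EuclideanSpace ℝ (Fin (2 * N)))
        = fderiv ℝ ψ a ∧
      ‖(J.symm : EuclideanSpace ℝ (Fin (2 * N)) →L[ℝ]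
          EuclideanSpace ℝ (Fin (2 * N)))‖ ≤ m)
    (αseq pseq : ℕ → EuclideanSpace ℝ (Fin (2 * N)))
    (iseq : ℕ → ℕ) (lamseq : ℕ → ℝ)
    (hα0 : ψ (αseq 0) ≠ 0)
    (hp : ∀ k, fderiv ℝ ψ (αseq k) (pseq k) = -ψ (αseq k))
    (hacc : ∀ k, ‖ψ (αseq k + ξ ^ iseq k • pseq k)‖ ≤
        (1 - ε * ξ ^ iseq k) * ‖ψ (αseq k)‖)
    (hmin : ∀ k, ∀ j < iseq k,
      ¬ (‖ψ (αseq k + ξ ^ j • pseq k)‖ ≤ (1 - ε * ξ ^ j) * ‖ψ (αseq k)‖))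
    (hlam : ∀ k, lamseq k = ξ ^ iseq k)
    (hrec : ∀ k, αseq (k + 1) = αseq k + lamseq k • pseq k) :
    (1 - ε * min 1 (ξ * (1 - ε) / (L * m ^ 2 * ‖ψ (αseq 0)‖)) ∈ Set.Ioo (0 : ℝ) 1) ∧
    (∀ k, ‖ψ (αseq k)‖ ≤
      (1 - ε * min 1 (ξ * (1 - ε) / (L * m ^ 2 * ‖ψ (αseq 0)‖))) ^ k *
        ‖ψ (αseq 0)‖) ∧
    Filter.Tendsto (fun k => ‖ψ (αseq k)‖) Filter.atTop (nhds 0) := by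
  obtain ⟨hξ0, hξ1⟩ := hξ
  obtain ⟨hε0, hε1⟩ := hε
  set P := ‖ψ (αseq 0)‖ with hP
  have hP0 : 0 < P := norm_pos_iff.mpr hα0
  set μ := min 1 (ξ * (1 - ε) / (L * m ^ 2 * P)) with hμ
  have hden : 0 < L * m ^ 2 * P := by positivity
  have hμ0 : 0 < μ := lt_min one_pos (div_pos (mul_pos hξ0 (by linarith)) hden)
  have hμ1 : μ ≤ 1 := min_le_left _ _
  set q := 1 - ε * μ with hq
  have hq1 : q < 1 := by nlinarith
  have hq0 : 0 < q := by nlinarith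
  -- bound on pseq
  have hpnorm : ∀ k, ‖pseq k‖ ≤ m * ‖ψ (αseq k)‖ := by
    intro k
    obtain ⟨J, hJ, hJm⟩ := hinv (αseq k)
    have h1 : J (pseq k) = -ψ (αseq k) := by
      rw [show J (pseq k) = (J : EuclideanSpace ℝ (Fin (2 * N)) →L[ℝ]
        EuclideanSpace ℝ (Fin (2 * N))) (pseq k) from rfl, hJ]; exact hp k
    have h2 : pseq k = J.symm (-ψ (αseq k)) := by
      rw [← h1]; simp
    rw [h2]
    calc ‖J.symm (-ψ (αseq k))‖ ≤ ‖(J.symm : EuclideanSpace ℝ (Fin (2 * N)) →L[ℝ]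
          EuclideanSpace ℝ (Fin (2 * N)))‖ * ‖-ψ (αseq k)‖ :=
        (J.symm : EuclideanSpace ℝ (Fin (2 * N)) →L[ℝ]
          EuclideanSpace ℝ (Fin (2 * N))).le_opNorm _
      _ ≤ m * ‖ψ (αseq k)‖ := by
          rw [norm_neg]; exact mul_le_mul_of_nonneg_right hJm (norm_nonneg _)
  -- main induction
  have main : ∀ k, ‖ψ (αseq k)‖ ≤ q ^ k * P := by
    intro k
    induction k with
    | zero => simp [hP]
    | succ k ih =>
      have hle : ‖ψ (αseq k)‖ ≤ P := by
        calc ‖ψ (αseq k)‖ ≤ q ^ k * P := ih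
          _ ≤ 1 * P := by
              apply mul_le_mul_of_nonneg_right _ hP0.le
              exact pow_le_one₀ hq0.le hq1.le
          _ = P := one_mul P
      have step : ‖ψ (αseq (k + 1))‖ ≤ q * ‖ψ (αseq k)‖ := by
        rcases eq_or_ne (ψ (αseq k)) 0 with h0 | h0
        · have := hacc k
          rw [h0] at this
          simp only [norm_zero, mul_zero] at this
          rw [hrec k, hlam k]
          rw [h0, norm_zero, mul_zero]
          exact this
        · have hψk : 0 < ‖ψ (αseq k)‖ := norm_pos_iff.mpr h0
          -- show ξ ^ iseq k ≥ μ
          have hstep : μ ≤ ξ ^ iseq k := by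
            rcases Nat.eq_zero_or_pos (iseq k) with hi | hi
            · rw [hi, pow_zero]; exact hμ1
            · obtain ⟨j, hj⟩ : ∃ j, iseq k = j + 1 := ⟨iseq k - 1, (Nat.succ_pred_eq_of_pos hi).symm⟩
              have hfail := hmin k j (by omega)
              push_neg at hfail
              have hξj0 : 0 < ξ ^ j := pow_pos hξ0 j
              have hξj1 : ξ ^ j ≤ 1 := pow_le_one₀ hξ0.le hξ1.le
              have htay := taylor_aux ψ hdiff L hL.le hlip (αseq k) (pseq k)
                (ξ ^ j) hξj0 hξj1 (hp k)
              have hcmp : (1 - ε * ξ ^ j) * ‖ψ (αseq k)‖ <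
                  (1 - ξ ^ j) * ‖ψ (αseq k)‖ + L * (ξ ^ j) ^ 2 * ‖pseq k‖ ^ 2 :=
                lt_of_lt_of_le hfail htay
              have hpk := hpnorm k
              have hpk2 : ‖pseq k‖ ^ 2 ≤ m ^ 2 * ‖ψ (αseq k)‖ ^ 2 := by
                nlinarith [norm_nonneg (pseq k), hψk.le]
              -- deduce (1 - ε) < L * ξ^j * m^2 * ‖ψ(αseq k)‖
              have e2 : L * (ξ ^ j) ^ 2 * ‖pseq k‖ ^ 2 ≤
                  L * (ξ ^ j) ^ 2 * (m ^ 2 * ‖ψ (αseq k)‖ ^ 2) :=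
                mul_le_mul_of_nonneg_left hpk2 (by positivity)
              have key : (1 - ε) < L * ξ ^ j * m ^ 2 * ‖ψ (αseq k)‖ := by
                by_contra hcon
                push_neg at hcon
                have hmul : (ξ ^ j * ‖ψ (αseq k)‖) * (L * ξ ^ j * m ^ 2 * ‖ψ (αseq k)‖) ≤
                    (ξ ^ j * ‖ψ (αseq k)‖) * (1 - ε) :=
                  mul_le_mul_of_nonneg_left hcon (by positivity)
                nlinarith [hcmp, e2, hmul]
              have hmono : L * ξ ^ j * m ^ 2 * ‖ψ (αseq k)‖ ≤ L * ξ ^ j * m ^ 2 * P :=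
                mul_le_mul_of_nonneg_left hle (by positivity)
              have key2 : (1 - ε) < L * ξ ^ j * m ^ 2 * P := lt_of_lt_of_le key hmono
              have hlb : ξ * (1 - ε) / (L * m ^ 2 * P) ≤ ξ ^ (j + 1) := by
                rw [div_le_iff₀ hden, pow_succ]
                nlinarith [mul_lt_mul_of_pos_left key2 hξ0]
              rw [hj]
              exact le_trans (min_le_right _ _) hlb
          calc ‖ψ (αseq (k + 1))‖ = ‖ψ (αseq k + ξ ^ iseq k • pseq k)‖ := by
                rw [hrec k, hlam k]
            _ ≤ (1 - ε * ξ ^ iseq k) * ‖ψ (αseq k)‖ := hacc k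
            _ ≤ q * ‖ψ (αseq k)‖ := by
                apply mul_le_mul_of_nonneg_right _ hψk.le
                rw [hq]
                nlinarith
      calc ‖ψ (αseq (k + 1))‖ ≤ q * ‖ψ (αseq k)‖ := step
        _ ≤ q * (q ^ k * P) := mul_le_mul_of_nonneg_left ih hq0.le
        _ = q ^ (k + 1) * P := by ring
  refine ⟨⟨hq0, hq1⟩, main, ?_⟩
  have hgeo : Filter.Tendsto (fun k => q ^ k * P) Filter.atTop (nhds 0) := by
    have := tendsto_pow_atTop_nhds_zero_of_lt_one hq0.le hq1
    simpa using this.mul_const P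
  exact squeeze_zero (fun k => norm_nonneg _) main hgeo
end
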